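/- Let O be a discrete valuation ring with maximal ideal m and finite residue field k = O/m, let O₂ = O/m², κ₀ : O₂ → k the quotient map, κ : GLₙ(O₂) → GLₙ(k) the induced reduction homomorphism, and K = ker κ. Fix a nontrivial character ψ : (k,+) → ℂˣ and a generator π of the ideal m·O₂. Then for every A ∈ Mₙ(k), the stabilizer of the character ψ_A of K under the conjugation action of GLₙ(O₂) equals the preimage under κ of the centralizer of A: T(ψ_A) = κ⁻¹( Z_{GLₙ(k)}(A) ), where Z_{GLₙ(k)}(A) = { g ∈ GLₙ(k) : gA = Ag }. -/

import Mathlib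

open Matrix

/-- The stabilizer `T(θ)` of a character `θ` of a normal subgroup `N` under the
conjugation action of `G`. -/
def charStabilizer {G : Type*} [Group G] (N : Subgroup G) [hN : N.Normal]
    (θ : ↥N →* ℂˣ) : Subgroup G where
  carrier := {g : G | ∀ (x : G) (hx : x ∈ N),
    θ ⟨g * x * g⁻¹, hN.conj_mem x hx g⟩ = θ ⟨x, hx⟩}
  one_mem' := by intro x hx; simp
  mul_mem' := by
    intro a b ha hb x hx
    have h2 := ha (b * x * b⁻¹) (hN.conj_mem x hx b)
    rw [hb x hx] at h2
    rw [← h2]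
    exact congrArg θ (Subtype.ext (by group))
  inv_mem' := by
    intro a ha x hx
    have h := ha (a⁻¹ * x * a⁻¹⁻¹) (hN.conj_mem x hx a⁻¹)
    rw [← h]
    exact congrArg θ (Subtype.ext (by group))

/-- The reduction map `O/m² → O/m = k`. -/
noncomputable def redRes (O : Type) [CommRing O] [IsLocalRing O] :
    O ⧸ (IsLocalRing.maximalIdeal O ^ 2) →+* IsLocalRing.ResidueField O :=
  Ideal.Quotient.factor (S := IsLocalRing.maximalIdeal O ^ 2) (T := IsLocalRing.maximalIdeal O)
    (Ideal.pow_le_self two_ne_zero)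

/-- The reduction homomorphism `κ : GLₙ(O/m²) → GLₙ(k)`. -/
noncomputable def redGL (O : Type) [CommRing O] [IsLocalRing O] (n : ℕ) :
    GL (Fin n) (O ⧸ (IsLocalRing.maximalIdeal O ^ 2)) →*
      GL (Fin n) (IsLocalRing.ResidueField O) :=
  Matrix.GeneralLinearGroup.map (redRes O)

/-!
The kernel of reduction consists exactly of the matrices `1 + π • Y`, and conjugation by `g`
sends `1 + π • Y` to `1 + π • (g * Y * g⁻¹)`. By cyclicity of the trace, `ψ_A` twisted by `g`
is then `ψ_B` with `B = ḡ⁻¹ * A * ḡ`, where `ḡ` is the reduction of `g`. For nontrivial `ψ` the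
pairing `(B, X) ↦ ψ (tr (B * X))` on `Mₙ(k)` is nondegenerate, so `ψ_B = ψ_A` forces `B = A`,
i.e. `ḡ` commutes with `A`.
-/

lemma Ideal.Quotient.mul_eq_zero_of_mem_map_mk_sq {R : Type*} [CommRing R] {I : Ideal R}
    {a b : R ⧸ I ^ 2} (ha : a ∈ I.map (Ideal.Quotient.mk (I ^ 2)))
    (hb : b ∈ I.map (Ideal.Quotient.mk (I ^ 2))) : a * b = 0 := by
  have hab := Ideal.mul_mem_mul ha hb
  rwa [← Ideal.map_mul, ← sq, Ideal.map_quotient_self, Ideal.mem_bot] at hab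

namespace Matrix

lemma map_surjective {m n α β : Type*} {f : α → β} (hf : Function.Surjective f) :
    Function.Surjective (fun M : Matrix m n α => M.map f) := fun M =>
  ⟨of fun i j => (hf (M i j)).choose, ext fun i j => (hf (M i j)).choose_spec⟩

variable {n : Type*} [Fintype n] [DecidableEq n]

theorem eq_of_forall_addChar_trace_mul_eq {k G : Type*} [Field k] [CommGroup G]
    (ψ : AddChar k G) (hψ : ∃ x, ψ x ≠ 1) {B C : Matrix n n k}
    (h : ∀ X, ψ (trace (B * X)) = ψ (trace (C * X))) : B = C := by
  obtain ⟨x, hx⟩ := hψ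
  ext i j
  by_contra hBC
  have hX := h (single j i (x / (B i j - C i j)))
  simp only [trace_mul_single] at hX
  apply hx
  rw [← mul_div_cancel₀ x (sub_ne_zero.2 hBC), sub_mul, AddChar.map_sub_eq_div, div_eq_one]
  exact hX

section SquareZero

variable {R k : Type*} [CommRing R] [CommRing k] {π : R}

lemma isUnit_one_add_smul (hπ : π * π = 0) (Y : Matrix n n R) : IsUnit (1 + π • Y) :=
  IsNilpotent.isUnit_one_add
    ⟨2, by rw [sq, Matrix.smul_mul, Matrix.mul_smul, smul_smul, hπ, zero_smul]⟩

lemma GeneralLinearGroup.coe_conj_of_eq_one_add_smul (g : GL n R) {x : GL n R}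
    {Y : Matrix n n R} (hY : (x : Matrix n n R) = 1 + π • Y) :
    ((g * x * g⁻¹ : GL n R) : Matrix n n R) = 1 + π • (g * Y * (g⁻¹ : GL n R)) := by
  rw [Units.val_mul, Units.val_mul, hY, mul_add, mul_one, add_mul, Matrix.mul_smul,
    Matrix.smul_mul, Units.mul_inv]

lemma GeneralLinearGroup.mem_ker_map_iff {f : R →+* k} (hker : RingHom.ker f = Ideal.span {π})
    {x : GL n R} :
    x ∈ (GeneralLinearGroup.map f).ker ↔
      ∃ Y : Matrix n n R, (x : Matrix n n R) = 1 + π • Y := by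
  have hfπ : f π = 0 := by rw [← RingHom.mem_ker, hker]; exact Ideal.mem_span_singleton_self π
  rw [MonoidHom.mem_ker, Units.ext_iff]
  change (x : Matrix n n R).map f = 1 ↔ _
  constructor
  · intro hx
    have hdvd (i j : n) : π ∣ (x - 1 : Matrix n n R) i j := by
      rw [← Ideal.mem_span_singleton, ← hker, RingHom.mem_ker, ← Matrix.map_apply (f := f),
        Matrix.map_sub _ (map_sub f), hx, Matrix.map_one _ f.map_zero f.map_one, sub_self,
        zero_apply]
    choose Y hY using hdvd
    exact ⟨of Y, by ext i j; simp [← hY]⟩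
  · rintro ⟨Y, hY⟩
    ext i j
    simp [hY, hfπ, one_apply, apply_ite f]

end SquareZero

end Matrix

lemma Matrix.GeneralLinearGroup.trace_mul_map_conj {n R k : Type*} [Fintype n] [DecidableEq n]
    [CommRing R] [CommRing k] (f : R →+* k) (A : Matrix n n k) (g : GL n R) (Y : Matrix n n R) :
    trace (A * (g * Y * (g⁻¹ : GL n R)).map f) =
      trace ((map f g⁻¹ : Matrix n n k) * A * (map f g : Matrix n n k) * Y.map f) := by
  rw [← RingHom.mapMatrix_apply, map_mul, map_mul, ← mul_assoc, trace_mul_comm, ← mul_assoc,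
    ← mul_assoc]
  rfl

section TraceCharacter

variable {n R k : Type*} [Fintype n] [DecidableEq n] [CommRing R] [Field k]

/-- `θ` is the character `ψ_A` of the kernel of reduction along `f`. -/
def IsTraceCharacter (f : R →+* k) (π : R) (ψ : AddChar k ℂˣ) (A : Matrix n n k)
    (θ : (GeneralLinearGroup.map (n := n) f).ker →* ℂˣ) : Prop :=
  ∀ (x : (GeneralLinearGroup.map (n := n) f).ker) (Y : Matrix n n R),
    ((x : GL n R) : Matrix n n R) = 1 + π • Y → θ x = ψ (trace (A * Y.map f))

variable {f : R →+* k} {π : R} {ψ : AddChar k ℂˣ} {A : Matrix n n k}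
  {θ : (GeneralLinearGroup.map (n := n) f).ker →* ℂˣ}

lemma IsTraceCharacter.apply_conj (hθ : IsTraceCharacter f π ψ A θ) (g : GL n R) {x : GL n R}
    (hx : x ∈ (GeneralLinearGroup.map (n := n) f).ker) {Y : Matrix n n R}
    (hY : (x : Matrix n n R) = 1 + π • Y) :
    θ ⟨g * x * g⁻¹, (GeneralLinearGroup.map f).normal_ker.conj_mem x hx g⟩ =
      ψ (trace ((GeneralLinearGroup.map f g⁻¹ : Matrix n n k) * A *
        (GeneralLinearGroup.map f g : Matrix n n k) * Y.map f)) := by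
  rw [hθ _ _ (GeneralLinearGroup.coe_conj_of_eq_one_add_smul g hY),
    GeneralLinearGroup.trace_mul_map_conj]

lemma IsTraceCharacter.mem_charStabilizer_iff (hθ : IsTraceCharacter f π ψ A θ)
    (hπ : π * π = 0) (hker : RingHom.ker f = Ideal.span {π}) (g : GL n R) :
    g ∈ charStabilizer (GeneralLinearGroup.map (n := n) f).ker θ ↔
      ∀ Y : Matrix n n R, ψ (trace ((GeneralLinearGroup.map f g⁻¹ : Matrix n n k) * A *
        (GeneralLinearGroup.map f g : Matrix n n k) * Y.map f)) = ψ (trace (A * Y.map f)) := by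
  refine ⟨fun hg Y => ?_, fun h x hx => ?_⟩
  · let x : GL n R := (isUnit_one_add_smul hπ Y).unit
    have hxY : (x : Matrix n n R) = 1 + π • Y := IsUnit.unit_spec _
    have hx := (GeneralLinearGroup.mem_ker_map_iff hker).2 ⟨Y, hxY⟩
    rw [← hθ.apply_conj g hx hxY, ← hθ ⟨x, hx⟩ Y hxY]
    exact hg x hx
  · obtain ⟨Y, hY⟩ := (GeneralLinearGroup.mem_ker_map_iff hker).1 hx
    rw [hθ.apply_conj g hx hY, hθ ⟨x, hx⟩ Y hY]
    exact h Y

theorem mem_charStabilizer_ker_map_iff (hf : Function.Surjective f) (hπ : π * π = 0)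
    (hker : RingHom.ker f = Ideal.span {π}) (hψ : ∃ x, ψ x ≠ 1)
    (hθ : IsTraceCharacter f π ψ A θ) (g : GL n R) :
    g ∈ charStabilizer (GeneralLinearGroup.map (n := n) f).ker θ ↔
      (GeneralLinearGroup.map f g : Matrix n n k) * A = A * GeneralLinearGroup.map f g := by
  set B : Matrix n n k := (GeneralLinearGroup.map f g⁻¹ : Matrix n n k) * A *
    (GeneralLinearGroup.map f g : Matrix n n k)
  calc g ∈ charStabilizer (GeneralLinearGroup.map (n := n) f).ker θ
      ↔ ∀ Y : Matrix n n R, ψ (trace (B * Y.map f)) = ψ (trace (A * Y.map f)) :=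
        hθ.mem_charStabilizer_iff hπ hker g
    _ ↔ ∀ X, ψ (trace (B * X)) = ψ (trace (A * X)) := by
        refine ⟨fun h X => ?_, fun h Y => h _⟩
        obtain ⟨Y, rfl⟩ := map_surjective hf X
        exact h Y
    _ ↔ B = A := ⟨eq_of_forall_addChar_trace_mul_eq ψ hψ, fun h X => by rw [h]⟩
    _ ↔ _ := by
        simp only [B, GeneralLinearGroup.map_inv]
        rw [mul_assoc, Units.inv_mul_eq_iff_eq_mul, eq_comm]

end TraceCharacter

theorem charStabilizer_eq_comap_centralizer_general
    (O : Type) [CommRing O] [IsDomain O] [IsDiscreteValuationRing O] (n : ℕ)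
    (π : O ⧸ (IsLocalRing.maximalIdeal O ^ 2))
    (hπ : Ideal.span {π} =
      Ideal.map (Ideal.Quotient.mk (IsLocalRing.maximalIdeal O ^ 2))
        (IsLocalRing.maximalIdeal O))
    (ψ : AddChar (IsLocalRing.ResidueField O) ℂˣ) (hψ : ∃ x, ψ x ≠ 1)
    (A : Matrix (Fin n) (Fin n) (IsLocalRing.ResidueField O))
    (θ : ↥(redGL O n).ker →* ℂˣ)
    (hθ : ∀ (x : ↥(redGL O n).ker)
        (Y : Matrix (Fin n) (Fin n) (O ⧸ (IsLocalRing.maximalIdeal O ^ 2))),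
      ((x : GL (Fin n) (O ⧸ (IsLocalRing.maximalIdeal O ^ 2))) :
          Matrix (Fin n) (Fin n) (O ⧸ (IsLocalRing.maximalIdeal O ^ 2))) = 1 + π • Y →
      θ x = ψ (Matrix.trace (A * Y.map (redRes O)))) :
    (charStabilizer (redGL O n).ker θ : Set (GL (Fin n) (O ⧸ (IsLocalRing.maximalIdeal O ^ 2)))) =
      (redGL O n) ⁻¹' {g : GL (Fin n) (IsLocalRing.ResidueField O) |
        (↑g : Matrix (Fin n) (Fin n) (IsLocalRing.ResidueField O)) * A =
          A * (↑g : Matrix (Fin n) (Fin n) (IsLocalRing.ResidueField O))} := by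
  have hπ_mem : π ∈ (IsLocalRing.maximalIdeal O).map
      (Ideal.Quotient.mk (IsLocalRing.maximalIdeal O ^ 2)) :=
    hπ ▸ Ideal.mem_span_singleton_self π
  ext g
  exact mem_charStabilizer_ker_map_iff (f := redRes O) (Ideal.Quotient.factor_surjective _)
    (Ideal.Quotient.mul_eq_zero_of_mem_map_mk_sq hπ_mem hπ_mem)
    ((Ideal.Quotient.factor_ker _).trans hπ.symm) hψ hθ g

/-- Let `O` be a discrete valuation ring with finite residue field `k`, `O₂ = O/m²`,
`κ : GLₙ(O₂) → GLₙ(k)` the reduction homomorphism and `K = ker κ`.  Fix a nontrivial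
additive character `ψ` of `k`, a generator `π` of `m·O₂`, and let `ψ_A` be the
character of `K` given by `ψ_A(1 + π·Y) = ψ(Tr(A·Ȳ))`.  Then the stabilizer of `ψ_A`
in `GLₙ(O₂)` is the preimage under `κ` of the centralizer of `A` in `GLₙ(k)`. -/
theorem charStabilizer_eq_comap_centralizer
    (O : Type) [CommRing O] [IsDomain O] [IsDiscreteValuationRing O]
    [Finite (IsLocalRing.ResidueField O)] (n : ℕ)
    (π : O ⧸ (IsLocalRing.maximalIdeal O ^ 2))
    (hπ : Ideal.span {π} =
      Ideal.map (Ideal.Quotient.mk (IsLocalRing.maximalIdeal O ^ 2))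
        (IsLocalRing.maximalIdeal O))
    (ψ : AddChar (IsLocalRing.ResidueField O) ℂˣ) (hψ : ∃ x, ψ x ≠ 1)
    (A : Matrix (Fin n) (Fin n) (IsLocalRing.ResidueField O))
    (θ : ↥(redGL O n).ker →* ℂˣ)
    (hθ : ∀ (x : ↥(redGL O n).ker)
        (Y : Matrix (Fin n) (Fin n) (O ⧸ (IsLocalRing.maximalIdeal O ^ 2))),
      ((x : GL (Fin n) (O ⧸ (IsLocalRing.maximalIdeal O ^ 2))) :
          Matrix (Fin n) (Fin n) (O ⧸ (IsLocalRing.maximalIdeal O ^ 2))) = 1 + π • Y →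
      θ x = ψ (Matrix.trace (A * Y.map (redRes O)))) :
    (charStabilizer (redGL O n).ker θ : Set (GL (Fin n) (O ⧸ (IsLocalRing.maximalIdeal O ^ 2)))) =
      (redGL O n) ⁻¹' {g : GL (Fin n) (IsLocalRing.ResidueField O) |
        (↑g : Matrix (Fin n) (Fin n) (IsLocalRing.ResidueField O)) * A =
          A * (↑g : Matrix (Fin n) (Fin n) (IsLocalRing.ResidueField O))} :=
  charStabilizer_eq_comap_centralizer_general O n π hπ ψ hψ A θ hθ
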